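/- arXiv:2401.08512 — 2 statements merged into one kernel-verified Lean document; each statement's English description precedes it below -/
import Mathlib

section
/- Let f : ℝ³ → ℝ be twice continuously differentiable, let q, β ∈ ℝ, and let X : ℝ → ℝ³ be twice differentiable with ∇f(X(t)) ≠ 0 for all t, satisfying the magnetic geodesic equation X''(t) = −(Hess f_{X(t)}(X'(t), X'(t)) / ‖∇f(X(t))‖²) • ∇f(X(t)) + q • (X'(t) × (β • n̂(X(t)))) for all t ∈ ℝ. If f(X(0)) = 0 and ⟨∇f(X(0)), X'(0)⟩ = 0, then for all t ∈ ℝ one has f(X(t)) = 0 and ⟨∇f(X(t)), X'(t)⟩ = 0; that is, solutions of the magnetic geodesic equation starting on the surface S = {f = 0} with tangential initial velocity remain on S with tangential velocity. -/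
/-- Cross product on `ℝ³` (as `EuclideanSpace ℝ (Fin 3)`). -/
noncomputable def cross3 (a b : EuclideanSpace ℝ (Fin 3)) : EuclideanSpace ℝ (Fin 3) :=
  WithLp.toLp 2 (crossProduct a b)

/-- The Hessian of `f` at `x` as a bilinear form: `⟪D(∇f)(x)[u], v⟫`. -/
noncomputable def hessian (f : EuclideanSpace ℝ (Fin 3) → ℝ)
    (x u v : EuclideanSpace ℝ (Fin 3)) : ℝ :=
  inner ℝ (fderiv ℝ (gradient f) x u) v

/-- The unit normal field `n̂(x) = ∇f(x)/‖∇f(x)‖` of level surfaces of `f`. -/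
noncomputable def nhat (f : EuclideanSpace ℝ (Fin 3) → ℝ)
    (x : EuclideanSpace ℝ (Fin 3)) : EuclideanSpace ℝ (Fin 3) :=
  ‖gradient f x‖⁻¹ • gradient f x

/-!
The magnetic force `q X' × (β n̂)` is orthogonal to `∇f`, and the Hessian term is exactly the
normal acceleration that keeps `⟪∇f(X), X'⟫` constant: differentiating,
`d/dt ⟪∇f(X), X'⟫ = Hess f(X', X') + ⟪∇f(X), X''⟫ = 0`. Hence the velocity stays tangential,
and then `d/dt f(X) = ⟪∇f(X), X'⟫ = 0` keeps `X` on the level set `{f = 0}`.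
-/

open InnerProductSpace RealInnerProductSpace

section Gradient

variable {E : Type*} [NormedAddCommGroup E] [InnerProductSpace ℝ E] [CompleteSpace E]

theorem ContDiff.differentiable_gradient {f : E → ℝ} (hf : ContDiff ℝ 2 f) :
    Differentiable ℝ (gradient f) := by
  have hfderiv : Differentiable ℝ (fderiv ℝ f) :=
    (hf.fderiv_right (m := 1) (by norm_num)).differentiable (by norm_num)
  exact (toDual ℝ E).symm.differentiable.comp hfderiv

theorem DifferentiableAt.hasDerivAt_comp_eq_inner_gradient {f : E → ℝ} {X : ℝ → E} {v : E}
    {t : ℝ} (hf : DifferentiableAt ℝ f (X t)) (hX : HasDerivAt X v t) :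
    HasDerivAt (fun s ↦ f (X s)) ⟪gradient f (X t), v⟫_ℝ t := by
  rw [inner_gradient_left]
  exact hf.hasFDerivAt.comp_hasDerivAt t hX

theorem ContDiff.hasDerivAt_inner_gradient_comp {f : E → ℝ} (hf : ContDiff ℝ 2 f)
    {X V : ℝ → E} {v a : E} {t : ℝ} (hX : HasDerivAt X v t) (hV : HasDerivAt V a t) :
    HasDerivAt (fun s ↦ ⟪gradient f (X s), V s⟫_ℝ)
      (⟪gradient f (X t), a⟫_ℝ + ⟪fderiv ℝ (gradient f) (X t) v, V t⟫_ℝ) t :=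
  ((hf.differentiable_gradient (X t)).hasFDerivAt.comp_hasDerivAt t hX).inner ℝ hV

end Gradient

theorem inner_cross3_self_right (v w : EuclideanSpace ℝ (Fin 3)) :
    ⟪w, cross3 v w⟫_ℝ = 0 := by
  rw [cross3, EuclideanSpace.inner_eq_star_dotProduct, WithLp.ofLp_toLp, star_trivial,
    dotProduct_comm]
  exact dot_cross_self v w

theorem cross3_smul_right (c : ℝ) (v w : EuclideanSpace ℝ (Fin 3)) :
    cross3 v (c • w) = c • cross3 v w := by
  simp [cross3]

theorem inner_gradient_cross3_nhat (f : EuclideanSpace ℝ (Fin 3) → ℝ)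
    (β : ℝ) (x v : EuclideanSpace ℝ (Fin 3)) :
    ⟪gradient f x, cross3 v (β • nhat f x)⟫_ℝ = 0 := by
  rw [nhat, smul_smul, cross3_smul_right, real_inner_smul_right, inner_cross3_self_right,
    mul_zero]

theorem inner_gradient_eq_neg_hessian_of_magnetic {f : EuclideanSpace ℝ (Fin 3) → ℝ} {q β : ℝ}
    {x v a : EuclideanSpace ℝ (Fin 3)} (hx : gradient f x ≠ 0)
    (ha : a = -(hessian f x v v / ‖gradient f x‖ ^ 2) • gradient f x
      + q • cross3 v (β • nhat f x)) :
    ⟪gradient f x, a⟫_ℝ = -hessian f x v v := by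
  have hnorm : ‖gradient f x‖ ^ 2 ≠ 0 := by positivity
  rw [ha, inner_add_right, real_inner_smul_right, real_inner_smul_right,
    inner_gradient_cross3_nhat, real_inner_self_eq_norm_sq]
  field_simp
  ring

/-- Solutions of the magnetic geodesic equation starting on the surface `{f = 0}` with
tangential initial velocity remain on the surface with tangential velocity. -/
theorem magnetic_geodesic_stays_on_surface
    (f : EuclideanSpace ℝ (Fin 3) → ℝ) (hf : ContDiff ℝ 2 f) (q β : ℝ)
    (X X' X'' : ℝ → EuclideanSpace ℝ (Fin 3))
    (hX : ∀ t, HasDerivAt X (X' t) t)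
    (hX' : ∀ t, HasDerivAt X' (X'' t) t)
    (hgrad : ∀ t, gradient f (X t) ≠ 0)
    (heqn : ∀ t, X'' t
      = -(hessian f (X t) (X' t) (X' t) / ‖gradient f (X t)‖ ^ 2) • gradient f (X t)
        + q • cross3 (X' t) (β • nhat f (X t)))
    (h0 : f (X 0) = 0)
    (h0' : (inner ℝ (gradient f (X 0)) (X' 0) : ℝ) = 0) :
    ∀ t, f (X t) = 0 ∧ (inner ℝ (gradient f (X t)) (X' t) : ℝ) = 0 := by
  have hnormal : ∀ t, HasDerivAt (fun s ↦ inner ℝ (gradient f (X s)) (X' s)) 0 t := fun t ↦ by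
    have h := hf.hasDerivAt_inner_gradient_comp (hX t) (hX' t)
    rwa [inner_gradient_eq_neg_hessian_of_magnetic (hgrad t) (heqn t), hessian,
      neg_add_cancel] at h
  have htangent : ∀ t, inner ℝ (gradient f (X t)) (X' t) = 0 := fun t ↦
    (is_const_of_deriv_eq_zero (fun s ↦ (hnormal s).differentiableAt)
      (fun s ↦ (hnormal s).deriv) t 0).trans h0'
  have hlevel : ∀ t, HasDerivAt (fun s ↦ f (X s)) 0 t := fun t ↦ by
    simpa [htangent t] using
      (hf.differentiable (by norm_num) (X t)).hasDerivAt_comp_eq_inner_gradient (hX t)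
  exact fun t ↦ ⟨(is_const_of_deriv_eq_zero (fun s ↦ (hlevel s).differentiableAt)
    (fun s ↦ (hlevel s).deriv) t 0).trans h0, htangent t⟩
end

section
/- Let f : ℝ³ → ℝ be twice continuously differentiable, let x ∈ ℝ³ satisfy f(x) = 0 and ∇f(x) ≠ 0, and let v ∈ ℝ³ be a unit vector orthogonal to n̂(x). Then, writing w := v × n̂(x), the following identity holds: v × (Dn̂(x)[w]) = −(Hess f_x(w, w) / ‖∇f(x)‖) • n̂(x). -/
/-! Since `n̂` has unit length, `Dn̂(x)[w]` is orthogonal to `n̂(x)`; as `v` is too, `v × Dn̂(x)[w]`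
is a multiple of `n̂(x)`, with coefficient `⟪n̂, v × Dn̂[w]⟫ = -⟪Dn̂[w], w⟫`. Differentiating
`n̂ = ‖∇f‖⁻¹ • ∇f`, the term coming from the derivative of `‖∇f‖⁻¹` is a multiple of `∇f(x)`, which is
orthogonal to `w`, so `⟪Dn̂[w], w⟫ = ‖∇f(x)‖⁻¹ Hess f_x(w, w)`. -/

open Topology Matrix

lemma EuclideanSpace.real_inner_eq_dotProduct {ι : Type*} [Fintype ι] (x y : EuclideanSpace ℝ ι) :
    inner ℝ x y = x.ofLp ⬝ᵥ y.ofLp := by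
  simp [EuclideanSpace.inner_eq_star_dotProduct, dotProduct_comm]

section Cross3

open EuclideanSpace

lemma cross3_cross3 (a b c : EuclideanSpace ℝ (Fin 3)) :
    cross3 a (cross3 b c) = inner ℝ a c • b - inner ℝ a b • c := by
  ext1
  simp [cross3, cross_cross_eq_smul_sub_smul', real_inner_eq_dotProduct, dotProduct_comm]

lemma inner_cross3_swap (a b c : EuclideanSpace ℝ (Fin 3)) :
    inner ℝ a (cross3 b c) = -inner ℝ c (cross3 b a) := by
  simp only [cross3, real_inner_eq_dotProduct]
  rw [triple_product_permutation a, triple_product_permutation c, ← cross_anticomm a c,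
    dotProduct_neg]

lemma inner_cross3_self_right_s7 (a b : EuclideanSpace ℝ (Fin 3)) :
    inner ℝ b (cross3 a b) = 0 := by
  simp [cross3, real_inner_eq_dotProduct]

-- `n × (v × d) = 0`, so `v × d` is parallel to the unit vector `n`.
lemma cross3_eq_neg_inner_smul {n v d : EuclideanSpace ℝ (Fin 3)} (hn : ‖n‖ = 1)
    (hv : inner ℝ v n = 0) (hd : inner ℝ d n = 0) :
    cross3 v d = -inner ℝ d (cross3 v n) • n := by
  have hnz : cross3 n (cross3 v d) = 0 := by
    rw [cross3_cross3, real_inner_comm, hd, real_inner_comm, hv, zero_smul, zero_smul, sub_zero]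
  have hnn : inner ℝ n n = (1 : ℝ) := by rw [real_inner_self_eq_norm_sq, hn, one_pow]
  calc cross3 v d = inner ℝ n (cross3 v d) • n - cross3 n (cross3 n (cross3 v d)) := by
        rw [cross3_cross3, hnn, one_smul, sub_sub_cancel]
    _ = -inner ℝ d (cross3 v n) • n := by
        rw [hnz, inner_cross3_swap]
        simp [cross3]

end Cross3

section Normalize

variable {E F : Type*} [NormedAddCommGroup E] [NormedSpace ℝ E]
  [NormedAddCommGroup F] [InnerProductSpace ℝ F] {g : E → F} {x : E}

lemma inner_fderiv_eq_zero_of_eventually_norm_eq (hg : DifferentiableAt ℝ g x) {c : ℝ}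
    (hc : ∀ᶠ y in 𝓝 x, ‖g y‖ = c) (u : E) : inner ℝ (g x) (fderiv ℝ g x u) = 0 := by
  have hconst : (fun y => ‖g y‖ ^ 2) =ᶠ[𝓝 x] fun _ => c ^ 2 := by
    filter_upwards [hc] with y hy
    rw [hy]
  have h : fderiv ℝ (fun y => ‖g y‖ ^ 2) x = 0 := by
    rw [hconst.fderiv_eq, fderiv_const_apply]
  rw [hg.hasFDerivAt.norm_sq.fderiv] at h
  simpa using DFunLike.congr_fun h u

lemma differentiableAt_inv_norm (hg : DifferentiableAt ℝ g x) (hx : g x ≠ 0) :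
    DifferentiableAt ℝ (fun y => ‖g y‖⁻¹) x :=
  (hg.norm ℝ hx).inv (norm_ne_zero_iff.mpr hx)

lemma differentiableAt_inv_norm_smul (hg : DifferentiableAt ℝ g x) (hx : g x ≠ 0) :
    DifferentiableAt ℝ (fun y => ‖g y‖⁻¹ • g y) x :=
  (differentiableAt_inv_norm hg hx).smul hg

lemma inner_fderiv_inv_norm_smul_self (hg : DifferentiableAt ℝ g x) (hx : g x ≠ 0) (u : E) :
    inner ℝ (‖g x‖⁻¹ • g x) (fderiv ℝ (fun y => ‖g y‖⁻¹ • g y) x u) = 0 := by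
  refine inner_fderiv_eq_zero_of_eventually_norm_eq (differentiableAt_inv_norm_smul hg hx)
    (c := 1) ?_ u
  filter_upwards [hg.continuousAt.eventually_ne hx] with y hy
  exact norm_smul_inv_norm hy

lemma inner_fderiv_inv_norm_smul_of_inner_eq_zero (hg : DifferentiableAt ℝ g x) (hx : g x ≠ 0)
    {w : F} (hw : inner ℝ (g x) w = 0) (u : E) :
    inner ℝ (fderiv ℝ (fun y => ‖g y‖⁻¹ • g y) x u) w = ‖g x‖⁻¹ * inner ℝ (fderiv ℝ g x u) w := by
  rw [fderiv_fun_smul (differentiableAt_inv_norm hg hx) hg]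
  simp [inner_add_left, real_inner_smul_left, hw]

end Normalize

lemma ContDiff.contDiff_gradient {E : Type*} [NormedAddCommGroup E] [InnerProductSpace ℝ E]
    [CompleteSpace E] {f : E → ℝ} {m n : WithTop ℕ∞} (hf : ContDiff ℝ n f) (hmn : m + 1 ≤ n) :
    ContDiff ℝ m (gradient f) :=
  (InnerProductSpace.toDual ℝ E).symm.contDiff.comp (hf.fderiv_right hmn)

theorem second_fund_form_identity_general
    (f : EuclideanSpace ℝ (Fin 3) → ℝ) (hf : ContDiff ℝ 2 f)
    (x : EuclideanSpace ℝ (Fin 3)) (hx : gradient f x ≠ 0)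
    (v : EuclideanSpace ℝ (Fin 3))
    (hvt : (inner ℝ v (nhat f x) : ℝ) = 0) :
    cross3 v (fderiv ℝ (nhat f) x (cross3 v (nhat f x)))
      = -(hessian f x (cross3 v (nhat f x)) (cross3 v (nhat f x)) / ‖gradient f x‖)
          • nhat f x := by
  set n := nhat f x
  set w := cross3 v n
  have hg : DifferentiableAt ℝ (gradient f) x :=
    (hf.contDiff_gradient (m := 1) le_rfl).differentiable one_ne_zero x
  have hn : ‖n‖ = 1 := norm_smul_inv_norm hx
  have hDn : inner ℝ (fderiv ℝ (nhat f) x w) n = 0 := by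
    rw [real_inner_comm]; exact inner_fderiv_inv_norm_smul_self hg hx w
  have hgw : inner ℝ (gradient f x) w = 0 := by
    have hgn : gradient f x = ‖gradient f x‖ • n := by
      simp [n, nhat, smul_smul, norm_ne_zero_iff.mpr hx]
    rw [hgn, real_inner_smul_left, inner_cross3_self_right_s7, mul_zero]
  have hDnw : inner ℝ (fderiv ℝ (nhat f) x w) w = ‖gradient f x‖⁻¹ * hessian f x w w :=
    inner_fderiv_inv_norm_smul_of_inner_eq_zero hg hx hgw w
  rw [cross3_eq_neg_inner_smul hn hvt hDn, hDnw, div_eq_inv_mul]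

/-- For a unit tangent vector `v` at a point `x` on the surface `{f = 0}`, setting
`w := v × n̂(x)` one has `v × (Dn̂(x)[w]) = −(Hess f_x(w, w)/‖∇f(x)‖) • n̂(x)`. -/
theorem second_fund_form_identity
    (f : EuclideanSpace ℝ (Fin 3) → ℝ) (hf : ContDiff ℝ 2 f)
    (x : EuclideanSpace ℝ (Fin 3)) (hx0 : f x = 0) (hx : gradient f x ≠ 0)
    (v : EuclideanSpace ℝ (Fin 3)) (hv : ‖v‖ = 1)
    (hvt : (inner ℝ v (nhat f x) : ℝ) = 0) :
    cross3 v (fderiv ℝ (nhat f) x (cross3 v (nhat f x)))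
      = -(hessian f x (cross3 v (nhat f x)) (cross3 v (nhat f x)) / ‖gradient f x‖)
          • nhat f x :=
  second_fund_form_identity_general f hf x hx v hvt
end
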